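/- arXiv:2502.13193 — 2 statements merged into one kernel-verified Lean document; each statement's English description precedes it below -/
import Mathlib

section
/- With f_i(z) = √2·cos(√2·ω_iᵀz + β_i) for ω_i ∼ N(0, I_{dL}), β_i uniform on [0,2π), and all data blocks of squared norm u, define g_i^{(ℓ)}(y) = e^{u(L−ℓ)}·f_i(ȳ) for y ∈ ℝ^{dℓ} with zero-padding ȳ ∈ ℝ^{dL}. Then for every x ∈ ℝ^{dL} (a concatenation of L blocks of squared norm u) and every y ∈ ℝ^{dℓ}, E[f_i(x)·g_i^{(ℓ)}(y)] = exp(−‖x^{[:ℓ]} − y‖₂²). -/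
open MeasureTheory ProbabilityTheory Real Finset

/-- The uniform distribution on `[0, 2π)`. -/
noncomputable def uniform02pi : Measure ℝ :=
  (ENNReal.ofReal (2 * Real.pi))⁻¹ • volume.restrict (Set.Ico 0 (2 * Real.pi))

/-!
Write `f(z) = √2 cos(√2 ωᵀz + β)`. By the product-to-sum formula,
`f(a) f(b) = cos(√2 ωᵀ(a - b)) + cos(2β + √2 ωᵀ(a + b))`, and the second term averages to zero
over the uniform phase `β`. The first is the real part of the characteristic function of the
standard Gaussian `ω` at `√2 (a - b)`, namely `exp(-‖a - b‖²)`. For `a = x`, `b = ȳ` the blocks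
beyond `ℓ` contribute `‖x^{[ℓ:]}‖² = u (L - ℓ)` to `‖a - b‖²`, which the factor `e^{u(L-ℓ)}`
cancels.
-/

theorem integral_cexp_sum_mul_I_pi {ι : Type*} [Fintype ι] {E : ι → Type*}
    [∀ i, MeasurableSpace (E i)] (μ : ∀ i, Measure (E i)) [∀ i, SigmaFinite (μ i)]
    (φ : ∀ i, E i → ℝ) :
    ∫ x, Complex.exp ((∑ i, φ i (x i) : ℝ) * Complex.I) ∂Measure.pi μ =
      ∏ i, ∫ y, Complex.exp (φ i y * Complex.I) ∂μ i := by
  simp_rw [Complex.ofReal_sum, Finset.sum_mul, Complex.exp_sum]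
  exact integral_fintype_prod_eq_prod fun i y => Complex.exp (φ i y * Complex.I)

theorem integral_cexp_mul_I_gaussianReal (t : ℝ) :
    ∫ y, Complex.exp ((y * t : ℝ) * Complex.I) ∂gaussianReal 0 1 =
      Complex.exp (-(t ^ 2) / 2 : ℝ) := by
  have h := charFun_gaussianReal (μ := 0) (v := 1) t
  rw [charFun_apply_real] at h
  push_cast
  simpa [mul_comm, neg_div] using h

theorem integral_cexp_sum_mul_I_pi_gaussianReal {ι : Type*} [Fintype ι] (t : ι → ℝ) :
    ∫ ω, Complex.exp ((∑ i, ω i * t i : ℝ) * Complex.I)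
        ∂Measure.pi (fun _ : ι => gaussianReal 0 1) =
      Complex.exp (-(∑ i, t i ^ 2) / 2 : ℝ) := by
  refine (integral_cexp_sum_mul_I_pi _ fun i y => y * t i).trans ?_
  simp_rw [integral_cexp_mul_I_gaussianReal, ← Complex.exp_sum]
  push_cast
  simp only [neg_div, Finset.sum_div, Finset.sum_neg_distrib]

theorem integral_cexp_sum_sum_mul_I_pi_gaussianReal {ι κ : Type*} [Fintype ι] [Fintype κ]
    (t : ι → κ → ℝ) :
    ∫ ω, Complex.exp ((∑ i, ∑ j, ω i j * t i j : ℝ) * Complex.I)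
        ∂Measure.pi (fun _ : ι => Measure.pi fun _ : κ => gaussianReal 0 1) =
      Complex.exp (-(∑ i, ∑ j, t i j ^ 2) / 2 : ℝ) := by
  refine (integral_cexp_sum_mul_I_pi _ fun i (w : κ → ℝ) => ∑ j, w j * t i j).trans ?_
  simp_rw [integral_cexp_sum_mul_I_pi_gaussianReal, ← Complex.exp_sum]
  push_cast
  simp only [neg_div, Finset.sum_div, Finset.sum_neg_distrib]

theorem integral_cos_sum_sum_mul_pi_gaussianReal {ι κ : Type*} [Fintype ι] [Fintype κ]
    (t : ι → κ → ℝ) :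
    ∫ ω, cos (∑ i, ∑ j, ω i j * t i j)
        ∂Measure.pi (fun _ : ι => Measure.pi fun _ : κ => gaussianReal 0 1) =
      exp (-(∑ i, ∑ j, t i j ^ 2) / 2) := by
  have hint : Integrable (fun ω : ι → κ → ℝ =>
      Complex.exp ((∑ i, ∑ j, ω i j * t i j : ℝ) * Complex.I))
      (Measure.pi fun _ : ι => Measure.pi fun _ : κ => gaussianReal 0 1) :=
    Integrable.of_bound (Continuous.aestronglyMeasurable (by fun_prop)) 1 (.of_forall fun ω => by
      rw [Complex.norm_exp_ofReal_mul_I])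
  have h := integral_re hint
  simp only [RCLike.re_to_complex, Complex.exp_ofReal_mul_I_re] at h
  rw [h, integral_cexp_sum_sum_mul_I_pi_gaussianReal, Complex.exp_ofReal_re]

instance : IsProbabilityMeasure uniform02pi := by
  constructor
  rw [uniform02pi, Measure.smul_apply, Measure.restrict_apply_univ, Real.volume_Ico,
    sub_zero, smul_eq_mul, ENNReal.inv_mul_cancel (by simp [Real.pi_pos]) ENNReal.ofReal_ne_top]

theorem integral_cos_two_mul_add_uniform02pi (c : ℝ) :
    ∫ β, cos (2 * β + c) ∂uniform02pi = 0 := by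
  rw [uniform02pi, integral_smul_measure, integral_Ico_eq_integral_Ioc,
    ← intervalIntegral.integral_of_le (by positivity),
    intervalIntegral.integral_comp_mul_add cos two_ne_zero c, integral_cos]
  rw [show 2 * (2 * π) + c = (c + 2 * π) + 2 * π by ring, sin_add_two_pi, sin_add_two_pi]
  simp

theorem integral_sqrt_two_cos_mul_sqrt_two_cos_prod_uniform02pi {Ω : Type*}
    [MeasurableSpace Ω] (ν : Measure Ω) [IsProbabilityMeasure ν] {P Q : Ω → ℝ}
    (hP : Measurable P) (hQ : Measurable Q) :
    ∫ p : Ω × ℝ, √2 * cos (P p.1 + p.2) * (√2 * cos (Q p.1 + p.2)) ∂ν.prod uniform02pi =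
      ∫ ω, cos (P ω - Q ω) ∂ν := by
  have hprod (A B : ℝ) : √2 * cos A * (√2 * cos B) = cos (A - B) + cos (A + B) := by
    rw [cos_sub, cos_add]
    linear_combination (cos A * cos B) * Real.mul_self_sqrt (zero_le_two : (0 : ℝ) ≤ 2)
  have hcos_int (f : Ω × ℝ → ℝ) (hf : Measurable f) :
      Integrable (fun p => cos (f p)) (ν.prod uniform02pi) :=
    Integrable.of_bound hf.cos.aestronglyMeasurable 1 (.of_forall fun p => abs_cos_le_one _)
  have hosc :
      Integrable (fun p : Ω × ℝ => cos (2 * p.2 + (P p.1 + Q p.1))) (ν.prod uniform02pi) :=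
    hcos_int _ (by fun_prop)
  simp_rw [hprod, add_sub_add_right_eq_sub,
    show ∀ p : Ω × ℝ, P p.1 + p.2 + (Q p.1 + p.2) = 2 * p.2 + (P p.1 + Q p.1) from
      fun p => by ring]
  rw [integral_add (hcos_int _ (by fun_prop)) hosc, integral_fun_fst (fun ω => cos (P ω - Q ω)),
    integral_prod _ hosc]
  simp [integral_cos_two_mul_add_uniform02pi]

theorem sum_norm_sub_sq_of_zero_padding {E : Type*} [SeminormedAddCommGroup E] {L ℓ : ℕ}
    (hℓ : ℓ ≤ L) {u : ℝ} {x y : Fin L → E} (hx : ∀ i : Fin L, ℓ ≤ (i : ℕ) → ‖x i‖ ^ 2 = u)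
    (hpad : ∀ i : Fin L, ℓ ≤ (i : ℕ) → y i = 0) :
    ∑ i, ‖x i - y i‖ ^ 2 =
      ∑ i ∈ univ.filter (fun i : Fin L => (i : ℕ) < ℓ), ‖x i - y i‖ ^ 2 + u * ((L : ℝ) - ℓ) := by
  rw [← sum_filter_add_sum_filter_not univ (fun i : Fin L => (i : ℕ) < ℓ)]
  congr 1
  have htail : ∀ i ∈ univ.filter (fun i : Fin L => ¬ (i : ℕ) < ℓ), ‖x i - y i‖ ^ 2 = u := by
    intro i hi
    rw [mem_filter, not_lt] at hi
    rw [hpad i hi.2, sub_zero, hx i hi.2]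
  have hcard : #(univ.filter fun i : Fin L => ¬ (i : ℕ) < ℓ) = L - ℓ := by
    have := card_filter_add_card_filter_not (s := univ) (fun i : Fin L => (i : ℕ) < ℓ)
    rw [Fin.card_filter_val_lt, card_univ, Fintype.card_fin, min_eq_right hℓ] at this
    omega
  rw [sum_congr rfl htail, sum_const, hcard, nsmul_eq_mul, Nat.cast_sub hℓ, mul_comm]

/-- with `f(z) = √2·cos(√2·ωᵀz + β)` for `ω ∼ N(0, I_{dL})`, `β` uniform
on `[0,2π)`, data `x ∈ ℝ^{dL}` a concatenation of `L` blocks of squared norm `u`, and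
`g^{(ℓ)}(y) = e^{u(L−ℓ)}·f(ȳ)` where `ȳ` is the zero-padding of `y ∈ ℝ^{dℓ}` (modeled
as a block vector `ybar` vanishing on blocks `≥ ℓ`),
`E[f(x)·g^{(ℓ)}(y)] = exp(−‖x^{[:ℓ]} − y‖²)`. -/
theorem stmt_11 (d L ℓ : ℕ) (hℓ : ℓ ≤ L) (u : ℝ)
    (x : Fin L → EuclideanSpace ℝ (Fin d)) (hx : ∀ i, ‖x i‖ ^ 2 = u)
    (ybar : Fin L → EuclideanSpace ℝ (Fin d))
    (hpad : ∀ i : Fin L, ℓ ≤ (i : ℕ) → ybar i = 0) :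
    ∫ p : (Fin L → Fin d → ℝ) × ℝ,
        (Real.sqrt 2 *
            Real.cos (Real.sqrt 2 * (∑ i, ∑ j, p.1 i j * x i j) + p.2)) *
          (Real.exp (u * ((L : ℝ) - ℓ)) *
            (Real.sqrt 2 *
              Real.cos (Real.sqrt 2 * (∑ i, ∑ j, p.1 i j * ybar i j) + p.2)))
        ∂((Measure.pi fun _ : Fin L => Measure.pi fun _ : Fin d =>
            gaussianReal 0 1).prod uniform02pi) =
      Real.exp (-(∑ i ∈ Finset.univ.filter (fun i : Fin L => (i : ℕ) < ℓ),
        ‖x i - ybar i‖ ^ 2)) := by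
  have hphase (a : Fin L → EuclideanSpace ℝ (Fin d)) :
      Measurable fun ω : Fin L → Fin d → ℝ => √2 * ∑ i, ∑ j, ω i j * a i j := by fun_prop
  have hdiff (ω : Fin L → Fin d → ℝ) :
      √2 * ∑ i, ∑ j, ω i j * x i j - √2 * ∑ i, ∑ j, ω i j * ybar i j =
        ∑ i, ∑ j, ω i j * (√2 * (x i j - ybar i j)) := by
    simp only [mul_sum, ← sum_sub_distrib]
    ring_nf
  have hvar : (∑ i, ∑ j, (√2 * (x i j - ybar i j)) ^ 2) / 2 = ∑ i, ‖x i - ybar i‖ ^ 2 := by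
    simp only [mul_pow, sq_sqrt zero_le_two, ← mul_sum, EuclideanSpace.real_norm_sq_eq,
      PiLp.sub_apply]
    ring
  simp_rw [mul_left_comm _ (exp _), integral_const_mul]
  rw [integral_sqrt_two_cos_mul_sqrt_two_cos_prod_uniform02pi _ (hphase x) (hphase ybar)]
  simp_rw [hdiff]
  rw [integral_cos_sum_sum_mul_pi_gaussianReal, neg_div, hvar,
    sum_norm_sub_sq_of_zero_padding hℓ (fun i _ => hx i) hpad, ← exp_add]
  ring_nf
end

section
/- Let p̃_v = KDE estimates with additive error at most α for true values p_v ≥ 0 over a finite vocabulary V, i.e., |p̃_v − p_v| ≤ α for all v, and suppose Σ_v p_v = P > α|V|. Then for every v, the sampling probability q̃_v = p̃_v / Σ_{v'} p̃_{v'} satisfies |q̃_v − p_v/P| ≤ 2α|V| / (P − α|V|) · max(1, p_v/P). -/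
/-!
Write `S = ∑ p̃` and `β = α|V|`. Summing the entrywise errors gives `|S - P| ≤ β`, so
`S ≥ P - β > 0`. The error of the normalised score splits as
`p̃_v/S - p_v/P = (p̃_v - p_v)/S + (p_v/P)(P - S)/S`, and each term is at most
`β/(P - β)` times `1` resp. `p_v/P`.
-/

open Finset

theorem Finset.abs_sum_sub_sum_le {ι : Type*} (s : Finset ι) {f g : ι → ℝ} {α : ℝ}
    (h : ∀ i ∈ s, |f i - g i| ≤ α) :
    |∑ i ∈ s, f i - ∑ i ∈ s, g i| ≤ s.card * α := by
  rw [← sum_sub_distrib]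
  calc |∑ i ∈ s, (f i - g i)| ≤ ∑ i ∈ s, |f i - g i| := abs_sum_le_sum_abs _ _
    _ ≤ ∑ _i ∈ s, α := sum_le_sum h
    _ = s.card * α := by rw [sum_const, nsmul_eq_mul]

theorem abs_div_sub_div_le_of_abs_sub_le {a b S P α β : ℝ} (hb : 0 ≤ b)
    (ha : |a - b| ≤ α) (hS : |S - P| ≤ β) (hαβ : α ≤ β) (hβP : β < P) :
    |a / S - b / P| ≤ 2 * β / (P - β) * max 1 (b / P) := by
  have hβ : 0 ≤ β := (abs_nonneg _).trans hS
  have hP : 0 < P := hβ.trans_lt hβP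
  have hSlb : P - β ≤ S := by linarith [(abs_le.mp hS).1]
  have hS₀ : 0 < S := by linarith
  have hsplit : a / S - b / P = (a - b) / S + b / P * ((P - S) / S) := by
    field_simp
    ring
  have hfirst : |(a - b) / S| ≤ β / (P - β) := by
    rw [abs_div, abs_of_pos hS₀]
    exact div_le_div₀ hβ (ha.trans hαβ) (by linarith) hSlb
  have hsecond : |(P - S) / S| ≤ β / (P - β) := by
    rw [abs_div, abs_of_pos hS₀, abs_sub_comm]
    exact div_le_div₀ hβ hS (by linarith) hSlb
  have hbP : 0 ≤ b / P := div_nonneg hb hP.le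
  calc |a / S - b / P|
      ≤ |(a - b) / S| + b / P * |(P - S) / S| := by
        rw [hsplit, ← abs_of_nonneg hbP, ← abs_mul, abs_of_nonneg hbP]
        exact abs_add_le _ _
    _ ≤ β / (P - β) * max 1 (b / P) + max 1 (b / P) * (β / (P - β)) := by
        gcongr
        · exact hfirst.trans (le_mul_of_one_le_right (by positivity) (le_max_left _ _))
        · exact le_max_right _ _
    _ = 2 * β / (P - β) * max 1 (b / P) := by ring

theorem stmt_17_general {V : Type*} [Fintype V] (α : ℝ) (p ptilde : V → ℝ)
    (hp : ∀ v, 0 ≤ p v)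
    (herr : ∀ v, |ptilde v - p v| ≤ α)
    (P : ℝ) (hP : P = ∑ v : V, p v)
    (hbig : α * (Fintype.card V : ℝ) < P) :
    ∀ v : V,
      |ptilde v / (∑ v' : V, ptilde v') - p v / P| ≤
        2 * α * (Fintype.card V : ℝ) / (P - α * (Fintype.card V : ℝ)) *
          max 1 (p v / P) := by
  intro v
  have hcard : (1 : ℝ) ≤ Fintype.card V := by exact_mod_cast Fintype.card_pos_iff.mpr ⟨v⟩
  have hα : 0 ≤ α := (abs_nonneg _).trans (herr v)
  have hsum : |∑ v', ptilde v' - P| ≤ α * Fintype.card V := by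
    rw [hP, mul_comm]
    exact univ.abs_sum_sub_sum_le fun v _ => herr v
  rw [mul_assoc 2 α]
  exact abs_div_sub_div_le_of_abs_sub_le (hp v) (herr v) hsum
    (le_mul_of_one_le_right hα hcard) hbig

/-- let `p̃` be KDE estimates over a finite vocabulary `V` with additive
error at most `α` w.r.t. the true nonnegative scores `p` (with `p̃ ≥ 0`, e.g. after
clipping), and suppose `P = Σ_v p_v > α|V|`. Then for every `v`, the sampling
probability `q̃_v = p̃_v / Σ_{v'} p̃_{v'}` satisfies
`|q̃_v − p_v/P| ≤ 2α|V|/(P − α|V|) · max(1, p_v/P)`. -/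
theorem stmt_17 {V : Type*} [Fintype V] (α : ℝ) (p ptilde : V → ℝ)
    (hp : ∀ v, 0 ≤ p v) (hptilde : ∀ v, 0 ≤ ptilde v)
    (herr : ∀ v, |ptilde v - p v| ≤ α)
    (P : ℝ) (hP : P = ∑ v : V, p v)
    (hbig : α * (Fintype.card V : ℝ) < P) :
    ∀ v : V,
      |ptilde v / (∑ v' : V, ptilde v') - p v / P| ≤
        2 * α * (Fintype.card V : ℝ) / (P - α * (Fintype.card V : ℝ)) *
          max 1 (p v / P) :=
  stmt_17_general α p ptilde hp herr P hP hbig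
end
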